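/- arXiv:1812.03649 — 3 statements merged into one kernel-verified Lean document; each statement's English description precedes it below -/
import Mathlib

section
/- Let n ≥ 1 and let ρ:(0,∞)→(0,∞) satisfy: there exist constants C > 0 and 0 < k₁ < k₂ with sup_{r/2 ≤ t ≤ r} ρ(t) ≤ C ∫_{k₁r}^{k₂r} ρ(t)/t dt for all r > 0. Define ρ̃(r) = ∫_{k₁r}^{k₂r} ρ(s)/s ds. Let τ:(0,∞)→(0,∞) be doubling in the sense that there is C'' ≥ 1 with (1/C'')τ(s) ≤ τ(r) ≤ C''τ(s) whenever 0 < s ≤ r ≤ 2s. Then there are constants C₁, C₂ > 0 such that for every r > 0: (a) Σ_{j=−∞}^{−1} ρ̃(2ʲ r) ≤ C₁ ∫₀^{k₂ r} ρ(s)/s ds, and (b) Σ_{j=0}^{∞} ρ̃(2ʲ r) τ((2ʲ r)^{−n}) ≤ C₂ ∫_{k₁ r}^{∞} (ρ(s)/s) τ(s^{−n}) ds. -/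
open MeasureTheory Metric Set Filter
open scoped ENNReal NNReal Topology

noncomputable section

/-- A Young function `Φ : [0,∞] → [0,∞]`: convex, left-continuous, vanishing (with limit `0`)
at `0`, and equal (with limit) to `∞` at `∞`. -/
structure IsYoung (Φ : ℝ≥0∞ → ℝ≥0∞) : Prop where
  map_zero : Φ 0 = 0
  convex : ∀ p q x y : ℝ≥0∞, p + q = 1 → Φ (p * x + q * y) ≤ p * Φ x + q * Φ y
  left_continuous : ∀ r : ℝ≥0∞, Φ r = ⨆ s ∈ Set.Iio r, Φ s
  tendsto_zero : Filter.Tendsto Φ (nhdsWithin 0 (Set.Ioi 0)) (nhds 0)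
  map_top : Φ ⊤ = ⊤
  tendsto_top : Filter.Tendsto (fun r : ℝ≥0 => Φ (r : ℝ≥0∞)) Filter.atTop (nhds ⊤)

/-- The generalized (O'Neil) inverse `Φ⁻¹(s) = inf {r ≥ 0 : Φ(r) > s}` (with `inf ∅ = ∞`). -/
def yInv (Φ : ℝ≥0∞ → ℝ≥0∞) (s : ℝ≥0∞) : ℝ≥0∞ := sInf {r : ℝ≥0∞ | s < Φ r}

/-- `r^{-n}` as an extended nonnegative real. -/
def rinv (n : ℕ) (r : ℝ) : ℝ≥0∞ := ENNReal.ofReal ((r ^ n)⁻¹)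

variable {α : Type*}

/-- Luxemburg (quasi-)norm of an `ℝ≥0∞`-valued function. -/
def luxNorm (Φ : ℝ≥0∞ → ℝ≥0∞) [MeasurableSpace α] (μ : Measure α) (g : α → ℝ≥0∞) : ℝ≥0∞ :=
  sInf {lam : ℝ≥0∞ | 0 < lam ∧ lam ≠ ⊤ ∧ (∫⁻ x, Φ (g x / lam) ∂μ) ≤ 1}

/-- Weak Luxemburg quasi-norm: `sup_{λ>0} ‖λ χ_{{g>λ}}‖_{L^Φ}`. -/
def wluxNorm (Φ : ℝ≥0∞ → ℝ≥0∞) [MeasurableSpace α] (μ : Measure α) (g : α → ℝ≥0∞) : ℝ≥0∞ :=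
  ⨆ (lam : ℝ≥0∞) (_ : 0 < lam) (_ : lam ≠ ⊤),
    luxNorm Φ μ (({x | lam < g x}).indicator (fun _ => lam))

/-- `|f|` regarded as an `ℝ≥0∞`-valued function. -/
def enn (f : α → ℝ) : α → ℝ≥0∞ := fun x => (‖f x‖₊ : ℝ≥0∞)

/-- Euclidean space `ℝⁿ`. -/
abbrev Euc (n : ℕ) := EuclideanSpace ℝ (Fin n)

/-- The generalized fractional integral operator `I_ρ`. -/
def Irho (n : ℕ) (ρ : ℝ → ℝ) (f : Euc n → ℝ) (x : Euc n) : ℝ :=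
  ∫ y, (ρ (dist x y) / (dist x y) ^ n) * f y

/-- The Hardy–Littlewood maximal operator. -/
def maxOp (n : ℕ) (f : Euc n → ℝ) (x : Euc n) : ℝ≥0∞ :=
  ⨆ (r : ℝ) (_ : 0 < r), (volume (ball x r))⁻¹ * ∫⁻ y in ball x r, (‖f y‖₊ : ℝ≥0∞)

/-- The generalized fractional maximal operator `M_ρ`. -/
def Mrho (n : ℕ) (ρ : ℝ → ℝ) (f : Euc n → ℝ) (x : Euc n) : ℝ≥0∞ :=
  ⨆ (r : ℝ) (_ : 0 < r),
    ENNReal.ofReal (ρ r) * ((volume (ball x r))⁻¹ * ∫⁻ y in ball x r, (‖f y‖₊ : ℝ≥0∞))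

/-- The `∇₂` condition: `Φ(r) ≤ (1/(2C)) Φ(C r)` for some `C > 1`. -/
def Nabla2 (Φ : ℝ≥0∞ → ℝ≥0∞) : Prop :=
  ∃ C : ℝ, 1 < C ∧ ∀ r : ℝ≥0∞, Φ r ≤ ENNReal.ofReal (1 / (2 * C)) * Φ (ENNReal.ofReal C * r)

/-- `∫₀¹ ρ(t)/t dt < ∞`. -/
def RhoInt (ρ : ℝ → ℝ) : Prop :=
  (∫⁻ t in Set.Ioo (0:ℝ) 1, ENNReal.ofReal (ρ t / t)) < ⊤

/-- `sup_{r/2 ≤ t ≤ r} ρ(t) ≤ C ∫_{k₁ r}^{k₂ r} ρ(t)/t dt` for all `r > 0`. -/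
def RhoSupWith (ρ : ℝ → ℝ) (C k₁ k₂ : ℝ) : Prop :=
  0 < C ∧ 0 < k₁ ∧ k₁ < k₂ ∧ ∀ r > (0:ℝ), ∀ t ∈ Set.Icc (r / 2) r,
    ENNReal.ofReal (ρ t) ≤
      ENNReal.ofReal C * ∫⁻ s in Set.Ioo (k₁ * r) (k₂ * r), ENNReal.ofReal (ρ s / s)

def RhoSup (ρ : ℝ → ℝ) : Prop := ∃ C k₁ k₂ : ℝ, RhoSupWith ρ C k₁ k₂

/-- The condition
`Φ⁻¹(r^{-n}) ∫₀^r ρ(t)/t dt + ∫_r^∞ ρ(t) Φ⁻¹(t^{-n}) dt/t ≤ C Ψ⁻¹(r^{-n})`. -/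
def CondOrl (n : ℕ) (Φ Ψ : ℝ≥0∞ → ℝ≥0∞) (ρ : ℝ → ℝ) : Prop :=
  ∃ C : ℝ, 0 < C ∧ ∀ r > (0:ℝ),
    yInv Φ (rinv n r) * (∫⁻ t in Set.Ioo (0:ℝ) r, ENNReal.ofReal (ρ t / t))
      + (∫⁻ t in Set.Ioi r, ENNReal.ofReal (ρ t / t) * yInv Φ (rinv n t))
    ≤ ENNReal.ofReal C * yInv Ψ (rinv n r)

/-- Generalized Orlicz–Morrey norm (third kind). -/
def morNorm (n : ℕ) (Φ : ℝ≥0∞ → ℝ≥0∞) (φ : ℝ → ℝ≥0∞) (g : Euc n → ℝ≥0∞) : ℝ≥0∞ :=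
  ⨆ (x : Euc n) (r : ℝ) (_ : 0 < r),
    (φ r)⁻¹ * yInv Φ (rinv n r) * luxNorm Φ volume ((ball x r).indicator g)

/-- Weak generalized Orlicz–Morrey norm (third kind). -/
def wMorNorm (n : ℕ) (Φ : ℝ≥0∞ → ℝ≥0∞) (φ : ℝ → ℝ≥0∞) (g : Euc n → ℝ≥0∞) : ℝ≥0∞ :=
  ⨆ (x : Euc n) (r : ℝ) (_ : 0 < r),
    (φ r)⁻¹ * yInv Φ (rinv n r) * wluxNorm Φ volume ((ball x r).indicator g)

/-- A real positive function regarded as `ℝ≥0∞`-valued. -/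
def ofR (φ : ℝ → ℝ) : ℝ → ℝ≥0∞ := fun t => ENNReal.ofReal (φ t)

/-- Almost increasing (on `(0,∞)`). -/
def AlmostInc (g : ℝ → ℝ≥0∞) : Prop :=
  ∃ C : ℝ, 0 < C ∧ ∀ r s : ℝ, 0 < r → r ≤ s → g r ≤ ENNReal.ofReal C * g s

/-- Almost decreasing (on `(0,∞)`). -/
def AlmostDec (g : ℝ → ℝ≥0∞) : Prop :=
  ∃ C : ℝ, 0 < C ∧ ∀ r s : ℝ, 0 < r → r ≤ s → ENNReal.ofReal C * g s ≤ g r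

/-- The class `G_Φ`: `φ` is positive, `t ↦ φ(t)/Φ⁻¹(t^{-n})` is almost increasing and
`t ↦ φ(t)/(Φ⁻¹(t^{-n}) tⁿ)` is almost decreasing. -/
def GPhi (n : ℕ) (Φ : ℝ≥0∞ → ℝ≥0∞) (φ : ℝ → ℝ) : Prop :=
  (∀ t > (0:ℝ), 0 < φ t) ∧
  AlmostInc (fun t => ENNReal.ofReal (φ t) / yInv Φ (rinv n t)) ∧
  AlmostDec (fun t => ENNReal.ofReal (φ t) / (yInv Φ (rinv n t) * ENNReal.ofReal (t ^ n)))


/-!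
If `k₂ ≤ 2 ^ L * k₁`, every point lies in at most `L` of the intervals
`(k₁ 2ʲ r, k₂ 2ʲ r)` (bounded overlap), so a sum of integrals over them is at most `L` times the
integral over their union. For (b), doubling of `τ` makes `τ((2ʲ r)⁻ⁿ)` comparable to `τ(s⁻ⁿ)` for
`s` in the `j`-th interval, with a constant independent of `j`.
-/

theorem ENNReal.ofReal_mul_ofReal_le (p q : ℝ) :
    ENNReal.ofReal p * ENNReal.ofReal q ≤ ENNReal.ofReal (p * q) := by
  rcases le_total 0 p with hp | hp
  · rw [ENNReal.ofReal_mul hp]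
  · simp [ENNReal.ofReal_of_nonpos hp]

theorem ENNReal.tsum_le_mul_of_support_subset_window {t : ℕ → ℝ≥0∞} {M : ℝ≥0∞} {L : ℕ}
    (hM : ∀ j, t j ≤ M) (hL : ∀ j j', t j ≠ 0 → t j' ≠ 0 → j' < j + L) :
    ∑' j, t j ≤ L * M := by
  classical
  by_cases h : ∃ j, t j ≠ 0
  swap
  · push Not at h
    simp [h]
  have hwindow : ∀ j ∉ Finset.Ico (Nat.find h) (Nat.find h + L), t j = 0 := by
    intro j hj
    by_contra hj0
    exact hj (Finset.mem_Ico.2 ⟨Nat.find_min' h hj0, hL _ j (Nat.find_spec h) hj0⟩)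
  calc ∑' j, t j = ∑ j ∈ Finset.Ico (Nat.find h) (Nat.find h + L), t j := tsum_eq_sum hwindow
    _ ≤ (Finset.Ico (Nat.find h) (Nat.find h + L)).card • M :=
      Finset.sum_le_card_nsmul _ _ _ fun j _ ↦ hM j
    _ = L * M := by simp

theorem MeasureTheory.tsum_setLIntegral_le_of_bounded_overlap {α : Type*} [MeasurableSpace α]
    {μ : Measure α} {g : α → ℝ≥0∞} (hg : Measurable g) {I : ℕ → Set α}
    (hI : ∀ j, MeasurableSet (I j)) {S : Set α} (hS : MeasurableSet S) (hIS : ∀ j, I j ⊆ S)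
    {L : ℕ} (hL : ∀ j j' x, x ∈ I j → x ∈ I j' → j' < j + L) :
    ∑' j, ∫⁻ x in I j, g x ∂μ ≤ L * ∫⁻ x in S, g x ∂μ := by
  have hpointwise : ∀ x, ∑' j, (I j).indicator g x ≤ L * S.indicator g x := fun x ↦
    ENNReal.tsum_le_mul_of_support_subset_window
      (fun j ↦ Set.indicator_le_indicator_of_subset (hIS j) (fun _ ↦ zero_le) x)
      (fun j j' hj hj' ↦ hL j j' x (Set.mem_of_indicator_ne_zero hj)
        (Set.mem_of_indicator_ne_zero hj'))
  calc ∑' j, ∫⁻ x in I j, g x ∂μ = ∫⁻ x, ∑' j, (I j).indicator g x ∂μ := by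
        simp_rw [← lintegral_indicator (hI _)]
        exact (lintegral_tsum fun j ↦ (hg.indicator (hI j)).aemeasurable).symm
    _ ≤ ∫⁻ x, L * S.indicator g x ∂μ := lintegral_mono hpointwise
    _ = L * ∫⁻ x in S, g x ∂μ := by
        rw [lintegral_const_mul _ (hg.indicator hS), lintegral_indicator hS]

theorem lt_add_of_mul_zpow_lt_mul_zpow {k₁ k₂ r : ℝ} {L : ℕ} (hk₁ : 0 < k₁) (hr : 0 < r)
    (hL : k₂ ≤ 2 ^ L * k₁) {p q : ℤ} (h : k₁ * (2 ^ p * r) < k₂ * (2 ^ q * r)) :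
    p < q + L := by
  have hpow : (2 : ℝ) ^ p * (k₁ * r) < 2 ^ (q + L) * (k₁ * r) := by
    calc (2 : ℝ) ^ p * (k₁ * r) = k₁ * (2 ^ p * r) := by ring
      _ < k₂ * (2 ^ q * r) := h
      _ ≤ 2 ^ L * k₁ * (2 ^ q * r) := by gcongr
      _ = 2 ^ (q + L) * (k₁ * r) := by rw [zpow_add₀ two_ne_zero, zpow_natCast]; ring
  exact (zpow_lt_zpow_iff_right₀ one_lt_two).1 (lt_of_mul_lt_mul_right hpow (by positivity))

def IsDoublingWith (τ : ℝ → ℝ) (C : ℝ) : Prop :=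
  ∀ s r : ℝ, 0 < s → s ≤ r → r ≤ 2 * s → τ s ≤ C * τ r ∧ τ r ≤ C * τ s

namespace IsDoublingWith

variable {τ : ℝ → ℝ} {C : ℝ}

theorem le_pow_mul_of_le_two_pow_mul (hτ : IsDoublingWith τ C) (hC : 0 ≤ C) (m : ℕ) :
    ∀ s r : ℝ, 0 < s → s ≤ r → r ≤ 2 ^ m * s → τ s ≤ C ^ m * τ r ∧ τ r ≤ C ^ m * τ s := by
  induction m with
  | zero =>
    intro s r _ hsr hrs
    obtain rfl : r = s := le_antisymm (by simpa using hrs) hsr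
    simp
  | succ m ih =>
    intro s r hs hsr hrs
    -- `r'` lies in `[s, 2 ^ m * s]` and within a factor `2` of `r`
    set r' := max s (r / 2)
    have hr' : 0 < r' := lt_max_of_lt_left hs
    obtain ⟨hsr', hr's⟩ := ih s r' hs (le_max_left _ _)
      (max_le (le_mul_of_one_le_left hs.le (one_le_pow₀ one_le_two))
        (by rw [pow_succ] at hrs; linarith))
    obtain ⟨hr'r, hrr'⟩ := hτ r' r hr' (max_le hsr (by linarith)) (by
      have := le_max_right s (r / 2); linarith)
    constructor
    · calc τ s ≤ C ^ m * τ r' := hsr'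
        _ ≤ C ^ m * (C * τ r) := by gcongr
        _ = C ^ (m + 1) * τ r := by ring
    · calc τ r ≤ C * τ r' := hrr'
        _ ≤ C * (C ^ m * τ s) := by gcongr
        _ = C ^ (m + 1) * τ s := by ring

theorem le_pow_mul (hτ : IsDoublingWith τ C) (hC : 0 ≤ C) {m : ℕ} {a b : ℝ} (ha : 0 < a)
    (hb : 0 < b) (hab : a ≤ 2 ^ m * b) (hba : b ≤ 2 ^ m * a) : τ a ≤ C ^ m * τ b := by
  rcases le_total a b with h | h
  · exact (hτ.le_pow_mul_of_le_two_pow_mul hC m a b ha h hba).1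
  · exact (hτ.le_pow_mul_of_le_two_pow_mul hC m b a hb h hab).2

end IsDoublingWith

section Dyadic

open ENNReal

variable {k₁ k₂ r : ℝ} {L : ℕ}

theorem tsum_setLIntegral_dyadic_below_le {g : ℝ → ℝ≥0∞} (hg : Measurable g) (hk₁ : 0 < k₁)
    (hL : k₂ ≤ 2 ^ L * k₁) (hr : 0 < r) :
    ∑' j : ℕ, ∫⁻ s in Ioo (k₁ * ((2 : ℝ) ^ (-(j : ℤ) - 1) * r)) (k₂ * ((2 : ℝ) ^ (-(j : ℤ) - 1) * r)),
      g s ≤ L * ∫⁻ s in Ioo 0 (k₂ * r), g s := by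
  refine tsum_setLIntegral_le_of_bounded_overlap hg (fun _ ↦ measurableSet_Ioo) measurableSet_Ioo
    (fun j s hs ↦ ?_) fun j j' s hs hs' ↦ ?_
  · have hscale : (0 : ℝ) < 2 ^ (-(j : ℤ) - 1) * r := by positivity
    have hk₂ : 0 < k₂ :=
      pos_of_mul_pos_left ((mul_pos hk₁ hscale).trans (hs.1.trans hs.2)) hscale.le
    refine ⟨(mul_pos hk₁ hscale).trans hs.1, hs.2.trans_le ?_⟩
    gcongr
    exact mul_le_of_le_one_left hr.le (zpow_le_one_of_nonpos₀ one_le_two (by omega))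
  · have := lt_add_of_mul_zpow_lt_mul_zpow hk₁ hr hL (hs.1.trans hs'.2)
    omega

theorem tsum_setLIntegral_dyadic_above_le {g : ℝ → ℝ≥0∞} (hg : Measurable g) (hk₁ : 0 < k₁)
    (hL : k₂ ≤ 2 ^ L * k₁) (hr : 0 < r) :
    ∑' j : ℕ, ∫⁻ s in Ioo (k₁ * ((2 : ℝ) ^ j * r)) (k₂ * ((2 : ℝ) ^ j * r)), g s ≤
      L * ∫⁻ s in Ioi (k₁ * r), g s := by
  refine tsum_setLIntegral_le_of_bounded_overlap hg (fun _ ↦ measurableSet_Ioo) measurableSet_Ioi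
    (fun j s hs ↦ ?_) fun j j' s hs hs' ↦ ?_
  · refine lt_of_le_of_lt ?_ hs.1
    gcongr
    exact le_mul_of_one_le_left hr.le (one_le_pow₀ one_le_two)
  · have h := hs'.1.trans hs.2
    simp only [← zpow_natCast] at h
    have := lt_add_of_mul_zpow_lt_mul_zpow hk₁ hr hL h
    omega

variable {τ : ℝ → ℝ} {C : ℝ} {m n : ℕ}

theorem setLIntegral_mul_le_of_doubling (hτ : IsDoublingWith τ C) (hC : 0 ≤ C) (f : ℝ → ℝ)
    {R : ℝ} (hR : 0 < R) (hk₁ : 1 ≤ 2 ^ m * k₁) (hk₂ : k₂ ≤ 2 ^ m) :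
    (∫⁻ s in Ioo (k₁ * R) (k₂ * R), ENNReal.ofReal (f s)) * ENNReal.ofReal (τ ((R ^ n)⁻¹)) ≤
      ENNReal.ofReal (C ^ (m * n)) *
        ∫⁻ s in Ioo (k₁ * R) (k₂ * R), ENNReal.ofReal (f s * τ ((s ^ n)⁻¹)) := by
  rw [← lintegral_mul_const' _ _ ofReal_ne_top, ← lintegral_const_mul' _ _ ofReal_ne_top]
  refine setLIntegral_mono' measurableSet_Ioo fun s hs ↦ ?_
  have hk₁0 : 0 < k₁ := pos_of_mul_pos_right (one_pos.trans_le hk₁) (by positivity)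
  have hs0 : 0 < s := (mul_pos hk₁0 hR).trans hs.1
  have hpow {a b : ℝ} (ha : 0 < a) (hb : 0 < b) (hab : a ≤ 2 ^ m * b) :
      (b ^ n)⁻¹ ≤ 2 ^ (m * n) * (a ^ n)⁻¹ := by
    rw [← inv_pow, ← inv_pow, pow_mul, ← mul_pow]
    gcongr
    rwa [← div_eq_mul_inv, inv_le_iff_one_le_mul₀ hb, div_mul_eq_mul_div, one_le_div ha]
  have hτs : τ ((R ^ n)⁻¹) ≤ C ^ (m * n) * τ ((s ^ n)⁻¹) :=
    hτ.le_pow_mul hC (by positivity) (by positivity)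
      (hpow hs0 hR (hs.2.le.trans (by gcongr)))
      (hpow hR hs0 (by nlinarith [hs.1]))
  calc ENNReal.ofReal (f s) * ENNReal.ofReal (τ ((R ^ n)⁻¹))
      ≤ ENNReal.ofReal (f s) * ENNReal.ofReal (C ^ (m * n) * τ ((s ^ n)⁻¹)) := by gcongr
    _ = ENNReal.ofReal (C ^ (m * n)) * (ENNReal.ofReal (f s) * ENNReal.ofReal (τ ((s ^ n)⁻¹))) := by
        rw [ENNReal.ofReal_mul (by positivity)]; ring
    _ ≤ ENNReal.ofReal (C ^ (m * n)) * ENNReal.ofReal (f s * τ ((s ^ n)⁻¹)) := by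
        gcongr; exact ENNReal.ofReal_mul_ofReal_le _ _

theorem tsum_setLIntegral_mul_doubling_le {f : ℝ → ℝ} (hf : Measurable f) (hτm : Measurable τ)
    (hτ : IsDoublingWith τ C) (hC : 0 ≤ C) (hk₁ : 0 < k₁) (hL : k₂ ≤ 2 ^ L * k₁)
    (hmk₁ : 1 ≤ 2 ^ m * k₁) (hmk₂ : k₂ ≤ 2 ^ m) (hr : 0 < r) :
    ∑' j : ℕ, (∫⁻ s in Ioo (k₁ * ((2 : ℝ) ^ j * r)) (k₂ * ((2 : ℝ) ^ j * r)), ENNReal.ofReal (f s)) *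
        ENNReal.ofReal (τ ((((2 : ℝ) ^ j * r) ^ n)⁻¹)) ≤
      ENNReal.ofReal (L * C ^ (m * n)) *
        ∫⁻ s in Ioi (k₁ * r), ENNReal.ofReal (f s * τ ((s ^ n)⁻¹)) := by
  have hg : Measurable fun s ↦ ENNReal.ofReal (f s * τ ((s ^ n)⁻¹)) := by fun_prop
  calc _ ≤ ∑' j : ℕ, ENNReal.ofReal (C ^ (m * n)) *
          ∫⁻ s in Ioo (k₁ * ((2 : ℝ) ^ j * r)) (k₂ * ((2 : ℝ) ^ j * r)),
            ENNReal.ofReal (f s * τ ((s ^ n)⁻¹)) :=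
        ENNReal.tsum_le_tsum fun j ↦
          setLIntegral_mul_le_of_doubling hτ hC f (by positivity) hmk₁ hmk₂
    _ ≤ ENNReal.ofReal (C ^ (m * n)) * (L * ∫⁻ s in Ioi (k₁ * r),
          ENNReal.ofReal (f s * τ ((s ^ n)⁻¹))) := by
        rw [ENNReal.tsum_mul_left]
        gcongr
        exact tsum_setLIntegral_dyadic_above_le hg hk₁ hL hr
    _ = _ := by
        rw [ENNReal.ofReal_mul (by positivity), ENNReal.ofReal_natCast]; ring

end Dyadic

theorem stmt3_general (n : ℕ) (ρ : ℝ → ℝ) (hρm : Measurable ρ)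
    (C k₁ k₂ : ℝ) (hsup : RhoSupWith ρ C k₁ k₂)
    (τ : ℝ → ℝ) (hτm : Measurable τ)
    (hτd : ∃ C'' : ℝ, 1 ≤ C'' ∧ ∀ s r : ℝ, 0 < s → s ≤ r → r ≤ 2 * s →
      τ s ≤ C'' * τ r ∧ τ r ≤ C'' * τ s) :
    ∃ C₁ C₂ : ℝ, 0 < C₁ ∧ 0 < C₂ ∧ ∀ r > (0:ℝ),
      ((∑' j : ℕ, ∫⁻ s in
            Set.Ioo (k₁ * ((2:ℝ) ^ (-(j:ℤ) - 1) * r)) (k₂ * ((2:ℝ) ^ (-(j:ℤ) - 1) * r)),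
          ENNReal.ofReal (ρ s / s))
        ≤ ENNReal.ofReal C₁ * ∫⁻ s in Set.Ioo (0:ℝ) (k₂ * r), ENNReal.ofReal (ρ s / s)) ∧
      ((∑' j : ℕ, (∫⁻ s in
            Set.Ioo (k₁ * ((2:ℝ) ^ (j:ℕ) * r)) (k₂ * ((2:ℝ) ^ (j:ℕ) * r)),
          ENNReal.ofReal (ρ s / s)) * ENNReal.ofReal (τ ((((2:ℝ) ^ (j:ℕ) * r) ^ n)⁻¹)))
        ≤ ENNReal.ofReal C₂ *
            ∫⁻ s in Set.Ioi (k₁ * r), ENNReal.ofReal (ρ s / s * τ ((s ^ n)⁻¹))) := by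
  obtain ⟨-, hk₁, hk₁₂, -⟩ := hsup
  obtain ⟨C'', hC'', hτd⟩ := hτd
  obtain ⟨L, hL⟩ := pow_unbounded_of_one_lt (k₂ / k₁) one_lt_two
  obtain ⟨m, hm⟩ := pow_unbounded_of_one_lt (max k₂ k₁⁻¹) one_lt_two
  have hLk : k₂ ≤ 2 ^ L * k₁ := ((div_lt_iff₀ hk₁).1 hL).le
  have hL0 : (0 : ℝ) < L := Nat.cast_pos.2 <| Nat.pos_of_ne_zero fun hL0 ↦ by
    simp only [hL0, pow_zero, one_mul] at hLk; linarith
  have hmk₁ : 1 ≤ 2 ^ m * k₁ := by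
    rw [← inv_le_iff_one_le_mul₀ hk₁]; exact (le_max_right _ _).trans hm.le
  have hρs : Measurable fun s ↦ ρ s / s := hρm.div measurable_id
  refine ⟨L, L * C'' ^ (m * n), hL0, by positivity, fun r hr ↦ ⟨?_, ?_⟩⟩
  · rw [ENNReal.ofReal_natCast]
    exact tsum_setLIntegral_dyadic_below_le hρs.ennreal_ofReal hk₁ hLk hr
  · exact tsum_setLIntegral_mul_doubling_le hρs hτm hτd (by linarith) hk₁ hLk hmk₁
      ((le_max_left _ _).trans hm.le) hr

/-- the overlapping estimates for `ρ̃(r) = ∫_{k₁ r}^{k₂ r} ρ(s)/s ds`. -/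
theorem stmt3 (n : ℕ) (hn : 1 ≤ n) (ρ : ℝ → ℝ) (hρm : Measurable ρ)
    (hρpos : ∀ t > (0:ℝ), 0 < ρ t)
    (C k₁ k₂ : ℝ) (hsup : RhoSupWith ρ C k₁ k₂)
    (τ : ℝ → ℝ) (hτm : Measurable τ) (hτpos : ∀ t > (0:ℝ), 0 < τ t)
    (hτd : ∃ C'' : ℝ, 1 ≤ C'' ∧ ∀ s r : ℝ, 0 < s → s ≤ r → r ≤ 2 * s →
      τ s ≤ C'' * τ r ∧ τ r ≤ C'' * τ s) :
    ∃ C₁ C₂ : ℝ, 0 < C₁ ∧ 0 < C₂ ∧ ∀ r > (0:ℝ),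
      ((∑' j : ℕ, ∫⁻ s in
            Set.Ioo (k₁ * ((2:ℝ) ^ (-(j:ℤ) - 1) * r)) (k₂ * ((2:ℝ) ^ (-(j:ℤ) - 1) * r)),
          ENNReal.ofReal (ρ s / s))
        ≤ ENNReal.ofReal C₁ * ∫⁻ s in Set.Ioo (0:ℝ) (k₂ * r), ENNReal.ofReal (ρ s / s)) ∧
      ((∑' j : ℕ, (∫⁻ s in
            Set.Ioo (k₁ * ((2:ℝ) ^ (j:ℕ) * r)) (k₂ * ((2:ℝ) ^ (j:ℕ) * r)),
          ENNReal.ofReal (ρ s / s)) * ENNReal.ofReal (τ ((((2:ℝ) ^ (j:ℕ) * r) ^ n)⁻¹)))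
        ≤ ENNReal.ofReal C₂ *
            ∫⁻ s in Set.Ioi (k₁ * r), ENNReal.ofReal (ρ s / s * τ ((s ^ n)⁻¹))) :=
  stmt3_general n ρ hρm C k₁ k₂ hsup τ hτm hτd
end
end

section
/- Let n ≥ 1, let Φ and Ψ be Young functions, and let ρ:(0,∞)→(0,∞) satisfy ∫₀¹ ρ(t)/t dt < ∞ and the condition that there exist constants C > 0 and 0 < k₁ < k₂ with sup_{r/2 ≤ t ≤ r} ρ(t) ≤ C ∫_{k₁r}^{k₂r} ρ(t)/t dt for all r > 0. Assume there is C > 0 with Φ^{-1}(r^{-n}) ∫₀^r ρ(t)/t dt + ∫_r^∞ ρ(t) Φ^{-1}(t^{-n}) dt/t ≤ C Ψ^{-1}(r^{-n}) for all r > 0. Then for any constant C₀ > 0 there exists C₁ > 0 such that for every nonnegative f ∈ L^Φ(ℝⁿ) with f ≠ 0 and every x ∈ ℝⁿ: I_ρ f(x) ≤ C₁ ‖f‖_{L^Φ} · Ψ^{-1}( Φ( Mf(x) / (C₀‖f‖_{L^Φ}) ) ). -/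
open MeasureTheory Metric Set Filter
open scoped ENNReal NNReal Topology

noncomputable section

variable {α : Type*}

/-!
Hedberg's argument. By `RhoSup`, `ρ(|x - y|)` is dominated by `∫ ρ(t)/t dt` over `t ≍ |x - y|`,
so by Tonelli `I_ρ f(x)` is dominated by `∫₀^∞ ρ(t)/t · t⁻ⁿ ∫_{B(x, ct)} f dt`. Split the
`t`-integral at the radius `R` with `R⁻ⁿ = s`: below `R` the ball terms are `≲ Mf(x)`, above `R`
the Orlicz–Hölder inequality bounds them by `≲ ‖f‖_{L^Φ} Φ⁻¹(t⁻ⁿ)`. If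
`s > Φ(Mf(x) / (C₀‖f‖))` then `Mf(x) ≤ C₀‖f‖ Φ⁻¹(s)`, and the hypothesis on `(Φ, Ψ, ρ)` at `R`
bounds both pieces by `‖f‖ Ψ⁻¹(s)`; letting `s` decrease to `Φ(Mf(x) / (C₀‖f‖))` is allowed
because the generalized inverse `Ψ⁻¹` is right-continuous.
-/

lemma le_mul_sInf {S : Set ℝ≥0∞} {a c : ℝ≥0∞} (hc0 : c ≠ 0) (hc : c ≠ ⊤)
    (h : ∀ v ∈ S, a ≤ c * v) : a ≤ c * sInf S := by
  simp only [sInf_eq_iInf, ENNReal.mul_iInf_of_ne hc0 hc]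
  exact le_iInf₂ h

lemma yInv_mono (Φ : ℝ≥0∞ → ℝ≥0∞) : Monotone (yInv Φ) :=
  fun _ _ hab => sInf_le_sInf fun _ hr => hab.trans_lt hr

lemma le_mul_yInv_of_forall_lt {Ψ : ℝ≥0∞ → ℝ≥0∞} {a c s : ℝ≥0∞} (hc0 : c ≠ 0) (hc : c ≠ ⊤)
    (h : ∀ s', s < s' → s' ≠ ⊤ → a ≤ c * yInv Ψ s') : a ≤ c * yInv Ψ s := by
  refine le_mul_sInf hc0 hc fun v (hv : s < Ψ v) => ?_
  obtain ⟨s', hss', hs'v⟩ := exists_between hv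
  have hyInv : yInv Ψ s' ≤ v := sInf_le (show s' < Ψ v from hs'v)
  exact (h s' hss' (ne_top_of_lt hs'v)).trans (mul_le_mul_right hyInv c)

section Young

variable {Φ : ℝ≥0∞ → ℝ≥0∞}

lemma IsYoung.monotone (hΦ : IsYoung Φ) : Monotone Φ := by
  intro a b hab
  rcases hab.eq_or_lt with rfl | hlt
  · exact le_rfl
  · rw [hΦ.left_continuous b]
    exact le_biSup _ hlt

lemma IsYoung.map_mul_le (hΦ : IsYoung Φ) {θ : ℝ≥0∞} (hθ : θ ≤ 1) (x : ℝ≥0∞) :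
    Φ (θ * x) ≤ θ * Φ x := by
  simpa [hΦ.map_zero] using hΦ.convex θ (1 - θ) x 0 (add_tsub_cancel_of_le hθ)

lemma IsYoung.mul_map_le (hΦ : IsYoung Φ) {c : ℝ≥0∞} (hc : 1 ≤ c) (hct : c ≠ ⊤) (x : ℝ≥0∞) :
    c * Φ x ≤ Φ (c * x) := by
  have hc0 : c ≠ 0 := (zero_lt_one.trans_le hc).ne'
  have h := hΦ.map_mul_le (ENNReal.inv_le_one.2 hc) (c * x)
  rwa [← mul_assoc, ENNReal.inv_mul_cancel hc0 hct, one_mul,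
    ← ENNReal.mul_le_mul_iff_right hc0 hct, ← mul_assoc, ENNReal.mul_inv_cancel hc0 hct,
    one_mul] at h

/-- Convexity: beyond `a`, `Φ` grows at least like `(s / a) · id`. -/
lemma IsYoung.le_add_mul_map (hΦ : IsYoung Φ) {s a : ℝ≥0∞} (hs0 : s ≠ 0) (hs : s < Φ a)
    (G : ℝ≥0∞) : G ≤ a + a * s⁻¹ * Φ G := by
  rcases le_or_gt G a with hGa | haG
  · exact le_add_right hGa
  have hst : s ≠ ⊤ := ne_top_of_lt hs
  have ha0 : a ≠ 0 := by rintro rfl; simp [hΦ.map_zero] at hs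
  rcases eq_or_ne G ⊤ with rfl | hGt
  · simp [hΦ.map_top, ENNReal.mul_top, ha0, hst]
  have hG0 : G ≠ 0 := (pos_of_gt haG).ne'
  have hθ : a / G ≤ 1 := ENNReal.div_le_of_le_mul (by rw [one_mul]; exact haG.le)
  have hconv : Φ a ≤ a / G * Φ G := by
    simpa [ENNReal.div_mul_cancel hG0 hGt] using hΦ.map_mul_le hθ G
  calc G = s⁻¹ * (s * G) := by
        rw [← mul_assoc, ENNReal.inv_mul_cancel hs0 hst, one_mul]
    _ ≤ s⁻¹ * (a / G * Φ G * G) := by gcongr; exact hs.le.trans hconv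
    _ = a * s⁻¹ * Φ G := by
        rw [mul_right_comm, ENNReal.div_mul_cancel hG0 hGt]; ring
    _ ≤ a + a * s⁻¹ * Φ G := le_add_self

lemma IsYoung.le_yInv (hΦ : IsYoung Φ) {u s : ℝ≥0∞} (hus : Φ u ≤ s) : u ≤ yInv Φ s :=
  le_sInf fun _ hv => (hΦ.monotone.reflect_lt (hus.trans_lt hv)).le

lemma IsYoung.lt_map_of_yInv_lt (hΦ : IsYoung Φ) {s v : ℝ≥0∞} (hv : yInv Φ s < v) :
    s < Φ v := by
  obtain ⟨w, hw, hwv⟩ := sInf_lt_iff.1 hv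
  exact hw.trans_le (hΦ.monotone hwv.le)

lemma IsYoung.yInv_pos (hΦ : IsYoung Φ) {s : ℝ≥0∞} (hs : s ≠ 0) : 0 < yInv Φ s := by
  have hev : ∀ᶠ v in 𝓝[>] 0, Φ v < s :=
    hΦ.tendsto_zero.eventually (gt_mem_nhds (pos_iff_ne_zero.2 hs))
  obtain ⟨δ, hδ, hδs⟩ := ((ENNReal.nhds_zero_basis.inf_principal _).eventually_iff).1 hev
  refine hδ.trans_le (le_sInf fun v hv => not_lt.1 fun hvδ => ?_)
  rcases eq_zero_or_pos v with rfl | hv0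
  · simp [hΦ.map_zero] at hv
  · exact (hδs ⟨hvδ, hv0⟩).not_gt hv

lemma IsYoung.yInv_lt_top (hΦ : IsYoung Φ) {s : ℝ≥0∞} (hs : s ≠ ⊤) : yInv Φ s < ⊤ := by
  obtain ⟨r, hr⟩ := (hΦ.tendsto_top.eventually (lt_mem_nhds (lt_top_iff_ne_top.2 hs))).exists
  exact (sInf_le (show s < Φ r from hr) : yInv Φ s ≤ r).trans_lt ENNReal.coe_lt_top

lemma IsYoung.yInv_mul_le (hΦ : IsYoung Φ) {c : ℝ≥0∞} (hc : c ≠ ⊤) (s : ℝ≥0∞) :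
    yInv Φ (c * s) ≤ max 1 c * yInv Φ s := by
  rcases le_total c 1 with hc1 | hc1
  · rw [max_eq_left hc1, one_mul]
    exact yInv_mono Φ (mul_le_of_le_one_left zero_le hc1)
  rw [max_eq_right hc1]
  have hc0 : c ≠ 0 := (zero_lt_one.trans_le hc1).ne'
  refine le_mul_sInf hc0 hc fun v hv => sInf_le ?_
  exact ((ENNReal.mul_lt_mul_iff_right hc0 hc).2 hv).trans_le (hΦ.mul_map_le hc1 hc v)

end Young

section Luxemburg

variable {Φ : ℝ≥0∞ → ℝ≥0∞} {X : Type*} [MeasurableSpace X] {μ : Measure X} {g : X → ℝ≥0∞}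

lemma le_luxNorm_mul {a c : ℝ≥0∞} (hc0 : c ≠ 0) (hc : c ≠ ⊤)
    (h : ∀ lam, 0 < lam → lam ≠ ⊤ → ∫⁻ x, Φ (g x / lam) ∂μ ≤ 1 → a ≤ lam * c) :
    a ≤ luxNorm Φ μ g * c := by
  rw [luxNorm, mul_comm]
  exact le_mul_sInf hc0 hc fun lam ⟨h0, ht, h1⟩ => (h lam h0 ht h1).trans_eq (mul_comm _ _)

/-- On a set of positive measure where `g > c`, admissible `λ` cannot be small: `Φ (c / λ)` would
exceed `1 / μ {c < g}`. -/
lemma IsYoung.luxNorm_pos (hΦ : IsYoung Φ) (hg : Measurable g) (hg0 : ¬ g =ᵐ[μ] 0) :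
    0 < luxNorm Φ μ g := by
  obtain ⟨k, hk⟩ : ∃ k : ℕ, μ {y | (k : ℝ≥0∞)⁻¹ < g y} ≠ 0 := by
    by_contra! hnull
    refine hg0 (measure_mono_null (fun y (hy : g y ≠ 0) => ?_) (measure_iUnion_null hnull))
    exact mem_iUnion.2 (ENNReal.exists_inv_nat_lt hy)
  set c : ℝ≥0∞ := (k : ℝ≥0∞)⁻¹
  set E := {y | c < g y}
  have hc0 : c ≠ 0 := ENNReal.inv_ne_zero.2 (ENNReal.natCast_ne_top k)
  obtain ⟨R, hR⟩ := (hΦ.tendsto_top.eventually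
    (lt_mem_nhds (ENNReal.inv_lt_top.2 (pos_iff_ne_zero.2 hk)))).exists
  refine (ENNReal.div_pos hc0 (ENNReal.coe_ne_top (r := R))).trans_le (le_sInf ?_)
  rintro lam ⟨hlam0, hlamt, hint⟩
  by_contra! hlam
  have hRc : (R : ℝ≥0∞) ≤ c / lam := by
    rw [ENNReal.le_div_iff_mul_le (Or.inl hlam0.ne') (Or.inl hlamt), mul_comm]
    exact ((ENNReal.lt_div_iff_mul_lt (Or.inr hlamt) (Or.inl ENNReal.coe_ne_top)).1 hlam).le
  have hbig : 1 < Φ R * μ E := by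
    rwa [← ENNReal.div_lt_iff (Or.inl hk) (Or.inr ENNReal.one_ne_top), one_div]
  refine hbig.not_ge (le_trans ?_ hint)
  calc Φ R * μ E = ∫⁻ _ in E, Φ R ∂μ := (setLIntegral_const E _).symm
    _ ≤ ∫⁻ y in E, Φ (g y / lam) ∂μ := setLIntegral_mono' (hg measurableSet_Ioi) fun y hy =>
        hΦ.monotone (hRc.trans (ENNReal.div_le_div_right (le_of_lt hy) lam))
    _ ≤ ∫⁻ y, Φ (g y / lam) ∂μ := setLIntegral_le_lintegral _ _

/-- The Orlicz–Hölder inequality against the indicator of `B`. -/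
lemma IsYoung.setLIntegral_le_luxNorm_mul (hΦ : IsYoung Φ) {B : Set X} (hB0 : μ B ≠ 0)
    (hBt : μ B ≠ ⊤) :
    ∫⁻ y in B, g y ∂μ ≤ luxNorm Φ μ g * (4 * yInv Φ (μ B)⁻¹ * μ B) := by
  set τ := yInv Φ (μ B)⁻¹
  have hs0 : (μ B)⁻¹ ≠ 0 := ENNReal.inv_ne_zero.2 hBt
  have hτ0 : τ ≠ 0 := (hΦ.yInv_pos hs0).ne'
  have hτt : τ ≠ ⊤ := (hΦ.yInv_lt_top (ENNReal.inv_ne_top.2 hB0)).ne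
  have hΦ2τ : (μ B)⁻¹ < Φ (2 * τ) :=
    hΦ.lt_map_of_yInv_lt (by rw [two_mul]; exact ENNReal.lt_add_right hτt hτ0)
  have h2τB : 2 * τ * μ B ≠ ⊤ := by finiteness
  refine le_luxNorm_mul (by positivity) (by finiteness) fun lam hlam0 hlamt hint => ?_
  calc ∫⁻ y in B, g y ∂μ = lam * ∫⁻ y in B, g y / lam ∂μ := by
        rw [← lintegral_const_mul' _ _ hlamt]
        simp_rw [ENNReal.mul_div_cancel hlam0.ne' hlamt]
    _ ≤ lam * ∫⁻ y in B, (2 * τ + 2 * τ * μ B * Φ (g y / lam)) ∂μ := by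
        gcongr with y
        simpa using hΦ.le_add_mul_map hs0 hΦ2τ (g y / lam)
    _ = lam * (2 * τ * μ B + 2 * τ * μ B * ∫⁻ y in B, Φ (g y / lam) ∂μ) := by
        rw [lintegral_add_left measurable_const, setLIntegral_const,
          lintegral_const_mul' _ _ h2τB]
    _ ≤ lam * (2 * τ * μ B + 2 * τ * μ B * 1) := by
        gcongr
        exact (setLIntegral_le_lintegral _ _).trans hint
    _ = lam * (4 * τ * μ B) := by ring

end Luxemburg

lemma ofReal_integral_le_lintegral_ofReal {X : Type*} [MeasurableSpace X] {μ : Measure X}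
    (g : X → ℝ) : ENNReal.ofReal (∫ x, g x ∂μ) ≤ ∫⁻ x, ENNReal.ofReal (g x) ∂μ := by
  by_cases hg : Integrable g μ
  · calc ENNReal.ofReal (∫ x, g x ∂μ) ≤ ENNReal.ofReal (∫ x, max (g x) 0 ∂μ) :=
          ENNReal.ofReal_le_ofReal (integral_mono hg hg.pos_part fun x => le_max_left _ _)
      _ = ∫⁻ x, ENNReal.ofReal (g x) ∂μ := by
          rw [ofReal_integral_eq_lintegral_ofReal hg.pos_part
            (ae_of_all _ fun x => le_max_right _ _)]
          simp
  · simp [integral_undef hg]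

lemma lintegral_setLIntegral_Ioo_mul_eq {X : Type*} [MeasurableSpace X] {μ : Measure X}
    [SFinite μ] {a b : X → ℝ} (ha : Measurable a) (hb : Measurable b) {h : ℝ → ℝ≥0∞}
    (hh : Measurable h) {w : X → ℝ≥0∞} (hw : Measurable w) :
    ∫⁻ y, (∫⁻ t in Ioo (a y) (b y), h t) * w y ∂μ =
      ∫⁻ t, h t * ∫⁻ y in {y | a y < t ∧ t < b y}, w y ∂μ := by
  set S := {p : X × ℝ | a p.1 < p.2 ∧ p.2 < b p.1}
  have hS : MeasurableSet S :=
    (measurableSet_lt (ha.comp measurable_fst) measurable_snd).inter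
      (measurableSet_lt measurable_snd (hb.comp measurable_fst))
  set F : X → ℝ → ℝ≥0∞ := fun y t => S.indicator (fun p => h p.2 * w p.1) (y, t)
  have hF : Measurable (Function.uncurry F) :=
    ((hh.comp measurable_snd).mul (hw.comp measurable_fst)).indicator hS
  calc ∫⁻ y, (∫⁻ t in Ioo (a y) (b y), h t) * w y ∂μ = ∫⁻ y, (∫⁻ t, F y t) ∂μ := by
        refine lintegral_congr fun y => ?_
        rw [← lintegral_mul_const _ hh, ← lintegral_indicator measurableSet_Ioo]
        congr 1 with t
    _ = ∫⁻ t, ∫⁻ y, F y t ∂μ := lintegral_lintegral_swap hF.aemeasurable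
    _ = ∫⁻ t, h t * ∫⁻ y in {y | a y < t ∧ t < b y}, w y ∂μ := by
        refine lintegral_congr fun t => ?_
        have hSt : MeasurableSet {y | a y < t ∧ t < b y} :=
          (measurableSet_lt ha measurable_const).inter (measurableSet_lt measurable_const hb)
        rw [← lintegral_const_mul _ hw, ← lintegral_indicator hSt]
        congr 1 with y

lemma lintegral_eq_Ioo_add_Ioi {F : ℝ → ℝ≥0∞} (hF : ∀ t ≤ 0, F t = 0) {R : ℝ} (hR : 0 ≤ R) :
    ∫⁻ t, F t = (∫⁻ t in Ioo 0 R, F t) + ∫⁻ t in Ioi R, F t := by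
  have hsupp : Function.support F ⊆ Ioi 0 := fun t ht => not_le.1 fun h => ht (hF t h)
  rw [← setLIntegral_eq_of_support_subset hsupp, ← Ioc_union_Ioi_eq_Ioi hR,
    lintegral_union measurableSet_Ioi Ioc_disjoint_Ioi_same, setLIntegral_congr Ioo_ae_eq_Ioc]

lemma rinv_div (n : ℕ) (t : ℝ) {a : ℝ} (ha : 0 ≤ a) :
    rinv n (t / a) = ENNReal.ofReal (a ^ n) * rinv n t := by
  rw [rinv, rinv, ← ENNReal.ofReal_mul (by positivity), div_pow, inv_div, div_eq_mul_inv]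

lemma rinv_mul_ofReal_pow (n : ℕ) {r : ℝ} (hr : 0 < r) : rinv n r * ENNReal.ofReal (r ^ n) = 1 := by
  rw [rinv, ← ENNReal.ofReal_mul (by positivity), inv_mul_cancel₀ (by positivity),
    ENNReal.ofReal_one]

lemma exists_rinv_eq {n : ℕ} (hn : n ≠ 0) {s : ℝ≥0∞} (hs0 : s ≠ 0) (hst : s ≠ ⊤) :
    ∃ R > 0, rinv n R = s := by
  have hs : 0 < s.toReal := ENNReal.toReal_pos hs0 hst
  refine ⟨s.toReal ^ (-(n : ℝ)⁻¹), Real.rpow_pos_of_pos hs _, ?_⟩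
  rw [rinv, ← Real.rpow_natCast, ← Real.rpow_mul hs.le, neg_mul,
    inv_mul_cancel₀ (Nat.cast_ne_zero.2 hn), Real.rpow_neg_one, inv_inv, ENNReal.ofReal_toReal hst]

lemma rinv_ne_top {n : ℕ} {r : ℝ} : rinv n r ≠ ⊤ := ENNReal.ofReal_ne_top

lemma rinv_anti {n : ℕ} {a b : ℝ} (ha : 0 < a) (hab : a ≤ b) : rinv n b ≤ rinv n a :=
  ENNReal.ofReal_le_ofReal (inv_anti₀ (by positivity) (pow_le_pow_left₀ ha.le hab n))

lemma rinv_le_mul_rinv_div {n : ℕ} {k₁ k₂ d t : ℝ} (hk₁ : 0 < k₁) (hk₂ : 0 < k₂) (ht : 0 < t)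
    (htd : t < 2 * k₂ * d) :
    rinv n d ≤ ENNReal.ofReal ((k₂ / k₁) ^ n) * rinv n (t / (2 * k₁)) := by
  have hscale : ENNReal.ofReal ((k₂ / k₁) ^ n) * rinv n (t / (2 * k₁)) = rinv n (t / (2 * k₂)) := by
    rw [rinv_div n t (by positivity), rinv_div n t (by positivity), ← mul_assoc,
      ← ENNReal.ofReal_mul (by positivity), ← mul_pow,
      show k₂ / k₁ * (2 * k₁) = 2 * k₂ by field_simp]
  rw [hscale]
  exact rinv_anti (by positivity) ((div_le_iff₀ (by positivity)).2 (by linarith))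

lemma measurable_rinv (n : ℕ) : Measurable (rinv n) :=
  ((measurable_id.pow_const n).inv).ennreal_ofReal

lemma RhoSupWith.ofReal_div_pow_le {ρ : ℝ → ℝ} {C k₁ k₂ : ℝ} (hsup : RhoSupWith ρ C k₁ k₂)
    {n : ℕ} (hn : n ≠ 0) {d : ℝ} (hd : 0 ≤ d) :
    ENNReal.ofReal (ρ d / d ^ n) ≤
      ENNReal.ofReal C * (∫⁻ t in Ioo (2 * k₁ * d) (2 * k₂ * d), ENNReal.ofReal (ρ t / t)) *
        rinv n d := by
  rcases hd.eq_or_lt with rfl | hd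
  · simp [zero_pow hn]
  rw [div_eq_mul_inv, ENNReal.ofReal_mul' (by positivity), ← rinv]
  gcongr
  simpa [mul_comm, mul_left_comm] using
    hsup.2.2.2 (2 * d) (by positivity) d ⟨by linarith, by linarith⟩

section Euclidean

variable {n : ℕ}

lemma volume_ball_euc (x : Euc n) {r : ℝ} (hr : 0 < r) :
    volume (ball x r) = ENNReal.ofReal (r ^ n) * volume (ball (0 : Euc n) 1) := by
  rw [Measure.addHaar_ball_of_pos volume x hr, finrank_euclideanSpace_fin]

lemma lintegral_ball_le_maxOp (f : Euc n → ℝ) (x : Euc n) {r : ℝ} (hr : 0 < r) :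
    ∫⁻ y in ball x r, (‖f y‖₊ : ℝ≥0∞) ≤ maxOp n f x * volume (ball x r) := by
  rw [← ENNReal.div_le_iff (measure_ball_pos volume x hr).ne' measure_ball_lt_top.ne,
    ENNReal.div_eq_inv_mul]
  exact le_iSup₂ (f := fun r (_ : 0 < r) =>
    (volume (ball x r))⁻¹ * ∫⁻ y in ball x r, (‖f y‖₊ : ℝ≥0∞)) r hr

lemma rinv_mul_lintegral_ball_le_maxOp (f : Euc n → ℝ) (x : Euc n) {r : ℝ} (hr : 0 < r) :
    rinv n r * ∫⁻ y in ball x r, (‖f y‖₊ : ℝ≥0∞) ≤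
      volume (ball (0 : Euc n) 1) * maxOp n f x := by
  calc rinv n r * ∫⁻ y in ball x r, (‖f y‖₊ : ℝ≥0∞)
      ≤ rinv n r * (maxOp n f x * volume (ball x r)) := by
        gcongr; exact lintegral_ball_le_maxOp f x hr
    _ = volume (ball (0 : Euc n) 1) * maxOp n f x * (rinv n r * ENNReal.ofReal (r ^ n)) := by
        rw [volume_ball_euc x hr]; ring
    _ = volume (ball (0 : Euc n) 1) * maxOp n f x := by rw [rinv_mul_ofReal_pow n hr, mul_one]

lemma IsYoung.rinv_mul_lintegral_ball_le_luxNorm {Φ : ℝ≥0∞ → ℝ≥0∞} (hΦ : IsYoung Φ)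
    (g : Euc n → ℝ≥0∞) (x : Euc n) {r : ℝ} (hr : 0 < r) :
    rinv n r * ∫⁻ y in ball x r, g y ≤
      4 * max 1 (volume (ball (0 : Euc n) 1))⁻¹ * volume (ball (0 : Euc n) 1) *
        luxNorm Φ volume g * yInv Φ (rinv n r) := by
  set ω := volume (ball (0 : Euc n) 1)
  have hω0 : ω ≠ 0 := (measure_ball_pos volume _ one_pos).ne'
  have hBinv : (volume (ball x r))⁻¹ = ω⁻¹ * rinv n r := by
    rw [volume_ball_euc x hr, ENNReal.mul_inv (Or.inr measure_ball_lt_top.ne) (Or.inr hω0),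
      rinv, ENNReal.ofReal_inv_of_pos (by positivity), mul_comm]
  calc rinv n r * ∫⁻ y in ball x r, g y
      ≤ rinv n r * (luxNorm Φ volume g *
          (4 * yInv Φ (volume (ball x r))⁻¹ * volume (ball x r))) := by
        gcongr
        exact hΦ.setLIntegral_le_luxNorm_mul (measure_ball_pos volume x hr).ne'
          measure_ball_lt_top.ne
    _ ≤ rinv n r * (luxNorm Φ volume g *
          (4 * (max 1 ω⁻¹ * yInv Φ (rinv n r)) * (ENNReal.ofReal (r ^ n) * ω))) := by
        rw [hBinv, volume_ball_euc x hr]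
        gcongr
        exact hΦ.yInv_mul_le (ENNReal.inv_ne_top.2 hω0) _
    _ = 4 * max 1 ω⁻¹ * ω * luxNorm Φ volume g * yInv Φ (rinv n r) *
          (rinv n r * ENNReal.ofReal (r ^ n)) := by ring
    _ = _ := by rw [rinv_mul_ofReal_pow n hr, mul_one]

lemma setLIntegral_shell_le {k₁ k₂ : ℝ} (hk₁ : 0 < k₁) (hk₂ : 0 < k₂) {g : Euc n → ℝ≥0∞}
    (hg : Measurable g) (x : Euc n) (t : ℝ) :
    ∫⁻ y in {y | 2 * k₁ * dist x y < t ∧ t < 2 * k₂ * dist x y}, rinv n (dist x y) * g y ≤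
      ENNReal.ofReal ((k₂ / k₁) ^ n) *
        (rinv n (t / (2 * k₁)) * ∫⁻ y in ball x (t / (2 * k₁)), g y) := by
  set c := ENNReal.ofReal ((k₂ / k₁) ^ n) * rinv n (t / (2 * k₁))
  calc _ ≤ ∫⁻ y in {y | 2 * k₁ * dist x y < t ∧ t < 2 * k₂ * dist x y}, c * g y := by
        refine setLIntegral_mono (hg.const_mul c) fun y hy => mul_le_mul_left ?_ _
        have ht : 0 < t := lt_of_le_of_lt (by positivity) hy.1
        exact rinv_le_mul_rinv_div hk₁ hk₂ ht hy.2
    _ ≤ ∫⁻ y in ball x (t / (2 * k₁)), c * g y := by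
        refine lintegral_mono_set fun y hy => ?_
        rw [mem_ball, dist_comm, lt_div_iff₀ (by positivity), mul_comm]
        exact hy.1
    _ = _ := by
        rw [lintegral_const_mul' _ _ (ENNReal.mul_ne_top ENNReal.ofReal_ne_top rinv_ne_top),
          mul_assoc]

lemma lintegral_rho_kernel_le (hn : n ≠ 0) {ρ : ℝ → ℝ} (hρ : Measurable ρ) {C k₁ k₂ : ℝ}
    (hsup : RhoSupWith ρ C k₁ k₂) {g : Euc n → ℝ≥0∞} (hg : Measurable g) (x : Euc n) :
    ∫⁻ y, ENNReal.ofReal (ρ (dist x y) / dist x y ^ n) * g y ≤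
      ENNReal.ofReal (C * (k₂ / k₁) ^ n) * ∫⁻ t, ENNReal.ofReal (ρ t / t) *
        (rinv n (t / (2 * k₁)) * ∫⁻ y in ball x (t / (2 * k₁)), g y) := by
  have hk₁ : 0 < k₁ := hsup.2.1
  have hk₂ : 0 < k₂ := hk₁.trans hsup.2.2.1
  have hd : Measurable fun y : Euc n => dist x y := measurable_const.dist measurable_id
  set w : Euc n → ℝ≥0∞ := fun y => rinv n (dist x y) * g y
  have hw : Measurable w := ((measurable_rinv n).comp hd).mul hg
  have hρt : Measurable fun t : ℝ => ENNReal.ofReal (ρ t / t) :=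
    (hρ.div measurable_id).ennreal_ofReal
  calc ∫⁻ y, ENNReal.ofReal (ρ (dist x y) / dist x y ^ n) * g y
      ≤ ∫⁻ y, ENNReal.ofReal C * ((∫⁻ t in Ioo (2 * k₁ * dist x y) (2 * k₂ * dist x y),
          ENNReal.ofReal (ρ t / t)) * w y) := by
        refine lintegral_mono fun y => ?_
        exact (mul_le_mul_left (hsup.ofReal_div_pow_le hn dist_nonneg) _).trans_eq (by ring)
    _ = ENNReal.ofReal C * ∫⁻ t, ENNReal.ofReal (ρ t / t) *
          ∫⁻ y in {y | 2 * k₁ * dist x y < t ∧ t < 2 * k₂ * dist x y}, w y := by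
        rw [lintegral_const_mul' _ _ ENNReal.ofReal_ne_top,
          lintegral_setLIntegral_Ioo_mul_eq (hd.const_mul _) (hd.const_mul _) hρt hw]
    _ ≤ ENNReal.ofReal C * ∫⁻ t, ENNReal.ofReal (ρ t / t) * (ENNReal.ofReal ((k₂ / k₁) ^ n) *
          (rinv n (t / (2 * k₁)) * ∫⁻ y in ball x (t / (2 * k₁)), g y)) := by
        gcongr with t
        exact setLIntegral_shell_le hk₁ hk₂ hg x t
    _ = _ := by
        rw [ENNReal.ofReal_mul hsup.1.le, mul_assoc]
        congr 1
        rw [← lintegral_const_mul' _ _ ENNReal.ofReal_ne_top]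
        congr 1 with t
        ring

lemma setLIntegral_Ioo_rho_ball_le_maxOp {ρ : ℝ → ℝ} (hρ : Measurable ρ) {k : ℝ} (hk : 0 < k)
    (f : Euc n → ℝ) (x : Euc n) (R : ℝ) :
    ∫⁻ t in Ioo 0 R, ENNReal.ofReal (ρ t / t) *
        (rinv n (t / k) * ∫⁻ y in ball x (t / k), (‖f y‖₊ : ℝ≥0∞)) ≤
      volume (ball (0 : Euc n) 1) * maxOp n f x * ∫⁻ t in Ioo 0 R, ENNReal.ofReal (ρ t / t) := by
  have hρt : Measurable fun t : ℝ => ENNReal.ofReal (ρ t / t) :=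
    (hρ.div measurable_id).ennreal_ofReal
  calc _ ≤ ∫⁻ t in Ioo 0 R, ENNReal.ofReal (ρ t / t) *
          (volume (ball (0 : Euc n) 1) * maxOp n f x) :=
        setLIntegral_mono' measurableSet_Ioo fun t ht => mul_le_mul_right
          (rinv_mul_lintegral_ball_le_maxOp f x (div_pos ht.1 hk)) _
    _ = _ := by rw [lintegral_mul_const _ hρt, mul_comm]

lemma IsYoung.setLIntegral_Ioi_rho_ball_le_luxNorm {Φ : ℝ≥0∞ → ℝ≥0∞} (hΦ : IsYoung Φ)
    {ρ : ℝ → ℝ} (hρ : Measurable ρ) {k : ℝ} (hk : 0 < k) (g : Euc n → ℝ≥0∞) (x : Euc n)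
    {R : ℝ} (hR : 0 ≤ R) :
    ∫⁻ t in Ioi R, ENNReal.ofReal (ρ t / t) * (rinv n (t / k) * ∫⁻ y in ball x (t / k), g y) ≤
      4 * max 1 (volume (ball (0 : Euc n) 1))⁻¹ * volume (ball (0 : Euc n) 1) *
        max 1 (ENNReal.ofReal (k ^ n)) * luxNorm Φ volume g *
        ∫⁻ t in Ioi R, ENNReal.ofReal (ρ t / t) * yInv Φ (rinv n t) := by
  set c := 4 * max 1 (volume (ball (0 : Euc n) 1))⁻¹ * volume (ball (0 : Euc n) 1)
  have hball : ∀ t > 0, rinv n (t / k) * ∫⁻ y in ball x (t / k), g y ≤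
      c * max 1 (ENNReal.ofReal (k ^ n)) * luxNorm Φ volume g * yInv Φ (rinv n t) := by
    intro t ht
    calc _ ≤ c * luxNorm Φ volume g * yInv Φ (rinv n (t / k)) :=
          hΦ.rinv_mul_lintegral_ball_le_luxNorm g x (div_pos ht hk)
      _ ≤ c * luxNorm Φ volume g * (max 1 (ENNReal.ofReal (k ^ n)) * yInv Φ (rinv n t)) := by
          rw [rinv_div n t hk.le]
          gcongr
          exact hΦ.yInv_mul_le ENNReal.ofReal_ne_top _
      _ = _ := by ring
  calc _ ≤ ∫⁻ t in Ioi R, c * max 1 (ENNReal.ofReal (k ^ n)) * luxNorm Φ volume g *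
          (ENNReal.ofReal (ρ t / t) * yInv Φ (rinv n t)) :=
        setLIntegral_mono' measurableSet_Ioi fun t ht =>
          (mul_le_mul_right (hball t (hR.trans_lt ht)) _).trans_eq (by ring)
    _ = _ := lintegral_const_mul _ ((hρ.div measurable_id).ennreal_ofReal.mul
          ((yInv_mono Φ).measurable.comp (measurable_rinv n)))

lemma ofReal_Irho_le {ρ : ℝ → ℝ} {f : Euc n → ℝ} (hf : ∀ y, 0 ≤ f y) (x : Euc n) :
    ENNReal.ofReal (Irho n ρ f x) ≤
      ∫⁻ y, ENNReal.ofReal (ρ (dist x y) / dist x y ^ n) * enn f y := by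
  refine (ofReal_integral_le_lintegral_ofReal _).trans_eq (lintegral_congr fun y => ?_)
  rw [ENNReal.ofReal_mul' (hf y), enn, ← Real.enorm_eq_ofReal (hf y)]
  rfl

lemma exists_lintegral_rho_kernel_le (hn : n ≠ 0) {Φ Ψ : ℝ≥0∞ → ℝ≥0∞} (hΦ : IsYoung Φ)
    {ρ : ℝ → ℝ} (hρ : Measurable ρ) (hρsup : RhoSup ρ) (hcond : CondOrl n Φ Ψ ρ)
    {C₀ : ℝ≥0∞} (hC₀ : C₀ ≠ ⊤) :
    ∃ K : ℝ≥0∞, K ≠ ⊤ ∧ ∀ f : Euc n → ℝ, Measurable f → ∀ (x : Euc n) (s : ℝ≥0∞),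
      s ≠ 0 → s ≠ ⊤ → maxOp n f x ≤ C₀ * luxNorm Φ volume (enn f) * yInv Φ s →
      ∫⁻ y, ENNReal.ofReal (ρ (dist x y) / dist x y ^ n) * enn f y ≤
        K * luxNorm Φ volume (enn f) * yInv Ψ s := by
  obtain ⟨CS, k₁, k₂, hsup⟩ := hρsup
  obtain ⟨CO, -, hCO⟩ := hcond
  have hk : 0 < 2 * k₁ := by linarith [hsup.2.1]
  set ω := volume (ball (0 : Euc n) 1)
  have hω0 : ω ≠ 0 := (measure_ball_pos volume _ one_pos).ne'
  have hωinv : ω⁻¹ ≠ ⊤ := ENNReal.inv_ne_top.2 hω0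
  set cfar := 4 * max 1 ω⁻¹ * ω * max 1 (ENNReal.ofReal ((2 * k₁) ^ n))
  set M := max (ω * C₀) cfar
  have hM : M ≠ ⊤ := max_ne_top (by finiteness) (by finiteness)
  set c := ENNReal.ofReal (CS * (k₂ / k₁) ^ n)
  refine ⟨c * M * ENNReal.ofReal CO, by finiteness, fun f hf x s hs0 hst hA => ?_⟩
  obtain ⟨R, hR, rfl⟩ := exists_rinv_eq hn hs0 hst
  set L := luxNorm Φ volume (enn f)
  have hF : ∀ t ≤ (0 : ℝ), ENNReal.ofReal (ρ t / t) *
      (rinv n (t / (2 * k₁)) * ∫⁻ y in ball x (t / (2 * k₁)), enn f y) = 0 := fun t ht => by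
    simp [ball_eq_empty.2 (div_nonpos_of_nonpos_of_nonneg ht hk.le)]
  calc ∫⁻ y, ENNReal.ofReal (ρ (dist x y) / dist x y ^ n) * enn f y
      ≤ c * ((∫⁻ t in Ioo 0 R, ENNReal.ofReal (ρ t / t) *
            (rinv n (t / (2 * k₁)) * ∫⁻ y in ball x (t / (2 * k₁)), enn f y)) +
          ∫⁻ t in Ioi R, ENNReal.ofReal (ρ t / t) *
            (rinv n (t / (2 * k₁)) * ∫⁻ y in ball x (t / (2 * k₁)), enn f y)) := by
        rw [← lintegral_eq_Ioo_add_Ioi hF hR.le]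
        exact lintegral_rho_kernel_le hn hρ hsup hf.nnnorm.coe_nnreal_ennreal x
    _ ≤ c * (ω * maxOp n f x * (∫⁻ t in Ioo 0 R, ENNReal.ofReal (ρ t / t)) +
          cfar * L * ∫⁻ t in Ioi R, ENNReal.ofReal (ρ t / t) * yInv Φ (rinv n t)) := by
        gcongr
        · exact setLIntegral_Ioo_rho_ball_le_maxOp hρ hk f x R
        · exact hΦ.setLIntegral_Ioi_rho_ball_le_luxNorm hρ hk _ x hR.le
    _ ≤ c * (M * L * (yInv Φ (rinv n R) * (∫⁻ t in Ioo 0 R, ENNReal.ofReal (ρ t / t)) +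
          ∫⁻ t in Ioi R, ENNReal.ofReal (ρ t / t) * yInv Φ (rinv n t))) := by
        gcongr c * ?_
        rw [mul_add (M * L)]
        refine add_le_add ?_ (by gcongr; exact le_max_right _ _)
        calc ω * maxOp n f x * ∫⁻ t in Ioo 0 R, ENNReal.ofReal (ρ t / t)
            ≤ ω * (C₀ * L * yInv Φ (rinv n R)) * ∫⁻ t in Ioo 0 R, ENNReal.ofReal (ρ t / t) := by
              gcongr
          _ = ω * C₀ * L *
                (yInv Φ (rinv n R) * ∫⁻ t in Ioo 0 R, ENNReal.ofReal (ρ t / t)) := by ring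
          _ ≤ _ := by gcongr; exact le_max_left _ _
    _ ≤ c * (M * L * (ENNReal.ofReal CO * yInv Ψ (rinv n R))) := by
        gcongr
        exact hCO R hR
    _ = _ := by ring

end Euclidean

theorem stmt4_general (n : ℕ) (hn : 1 ≤ n) (Φ Ψ : ℝ≥0∞ → ℝ≥0∞)
    (hΦ : IsYoung Φ)
    (ρ : ℝ → ℝ) (hρm : Measurable ρ)
    (hρ2 : RhoSup ρ) (hcond : CondOrl n Φ Ψ ρ) :
    ∀ C₀ : ℝ, 0 < C₀ → ∃ C₁ : ℝ, 0 < C₁ ∧ ∀ f : Euc n → ℝ, Measurable f →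
      (∀ x, 0 ≤ f x) → luxNorm Φ volume (enn f) ≠ ⊤ → ¬ (f =ᵐ[volume] 0) →
      ∀ x : Euc n,
        ENNReal.ofReal (Irho n ρ f x) ≤
          ENNReal.ofReal C₁ * luxNorm Φ volume (enn f) *
            yInv Ψ (Φ (maxOp n f x / (ENNReal.ofReal C₀ * luxNorm Φ volume (enn f)))) := by
  intro C₀ hC₀
  obtain ⟨K, hK, hkernel⟩ := exists_lintegral_rho_kernel_le (by omega) hΦ hρm hρ2 hcond
    (C₀ := ENNReal.ofReal C₀) ENNReal.ofReal_ne_top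
  refine ⟨K.toReal + 1, by positivity, fun f hf hf0 hLt hfz x => ?_⟩
  set L := luxNorm Φ volume (enn f)
  have hL0 : L ≠ 0 := (hΦ.luxNorm_pos hf.nnnorm.coe_nnreal_ennreal fun h =>
    hfz (h.mono fun y hy => by simpa [enn] using hy)).ne'
  have hKC : K ≤ ENNReal.ofReal (K.toReal + 1) := by
    rw [ENNReal.ofReal_add ENNReal.toReal_nonneg zero_le_one, ENNReal.ofReal_toReal hK]
    exact le_self_add
  refine (ofReal_Irho_le hf0 x).trans
    (le_mul_yInv_of_forall_lt (by positivity) (by finiteness) fun s hs hst => ?_)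
  have hA : maxOp n f x ≤ ENNReal.ofReal C₀ * L * yInv Φ s := by
    rw [mul_comm _ (yInv Φ s), ← ENNReal.div_le_iff (by positivity) (by finiteness)]
    exact hΦ.le_yInv hs.le
  calc _ ≤ K * L * yInv Ψ s := hkernel f hf x s (pos_of_gt hs).ne' hst hA
    _ ≤ _ := mul_le_mul_left (mul_le_mul_left hKC L) _

/-- Hedberg-type pointwise estimate for `I_ρ`. -/
theorem stmt4 (n : ℕ) (hn : 1 ≤ n) (Φ Ψ : ℝ≥0∞ → ℝ≥0∞)
    (hΦ : IsYoung Φ) (hΨ : IsYoung Ψ)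
    (ρ : ℝ → ℝ) (hρm : Measurable ρ) (hρpos : ∀ t > (0:ℝ), 0 < ρ t)
    (hρ1 : RhoInt ρ) (hρ2 : RhoSup ρ) (hcond : CondOrl n Φ Ψ ρ) :
    ∀ C₀ : ℝ, 0 < C₀ → ∃ C₁ : ℝ, 0 < C₁ ∧ ∀ f : Euc n → ℝ, Measurable f →
      (∀ x, 0 ≤ f x) → luxNorm Φ volume (enn f) ≠ ⊤ → ¬ (f =ᵐ[volume] 0) →
      ∀ x : Euc n,
        ENNReal.ofReal (Irho n ρ f x) ≤
          ENNReal.ofReal C₁ * luxNorm Φ volume (enn f) *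
            yInv Ψ (Φ (maxOp n f x / (ENNReal.ofReal C₀ * luxNorm Φ volume (enn f)))) :=
  stmt4_general n hn Φ Ψ hΦ ρ hρm hρ2 hcond

end
end

section
/- Let n ≥ 1, let Φ be a Young function, and let φ be a positive measurable function on (0,∞) such that inf_{t ≥ r} φ(t)/Φ^{-1}(t^{-n}) > 0 for every r > 0. Define ψ(r) = Φ^{-1}(r^{-n}) · inf_{t ≥ r} φ(t)/Φ^{-1}(t^{-n}) for r > 0. Then r ↦ ψ(r)/Φ^{-1}(r^{-n}) is increasing, and M^{Φ,φ}(ℝⁿ) = M^{Φ,ψ}(ℝⁿ) with ‖f‖_{M^{Φ,ψ}} = ‖f‖_{M^{Φ,φ}} for every f. -/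
open MeasureTheory Metric Set Filter
open scoped ENNReal NNReal Topology

noncomputable section

variable {α : Type*}

/-- The auxiliary function `ψ(r) = Φ⁻¹(r^{-n}) · inf_{t ≥ r} φ(t)/Φ⁻¹(t^{-n})`. -/
def psiAux (n : ℕ) (Φ : ℝ≥0∞ → ℝ≥0∞) (φ : ℝ → ℝ) (r : ℝ) : ℝ≥0∞ :=
  yInv Φ (rinv n r) * ⨅ (t : ℝ) (_ : r ≤ t), ENNReal.ofReal (φ t) / yInv Φ (rinv n t)

namespace IsYoung

variable {Φ : ℝ≥0∞ → ℝ≥0∞}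

theorem monotone_s9 (hΦ : IsYoung Φ) : Monotone Φ := by
  intro a b hab
  rw [hΦ.left_continuous a, hΦ.left_continuous b]
  exact biSup_mono fun s hs => hs.trans_le hab

theorem yInv_ne_zero (hΦ : IsYoung Φ) {s : ℝ≥0∞} (hs : s ≠ 0) : yInv Φ s ≠ 0 := by
  have hsmall : ∀ᶠ x in 𝓝[>] 0, Φ x < s := hΦ.tendsto_zero.eventually_lt_const hs.bot_lt
  rw [eventually_nhdsWithin_iff] at hsmall
  obtain ⟨ε, hε, hΦlt⟩ := ENNReal.nhds_zero_basis.eventually_iff.mp hsmall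
  have hε_le : ε ≤ yInv Φ s := by
    refine le_sInf fun b (hb : s < Φ b) => ?_
    by_contra! hbε
    rcases eq_or_ne b 0 with rfl | hb0
    · exact (zero_le (a := s)).not_gt (hΦ.map_zero ▸ hb)
    · exact hb.not_gt (hΦlt hbε hb0.bot_lt)
  exact (hε.trans_le hε_le).ne'

theorem yInv_ne_top (hΦ : IsYoung Φ) {s : ℝ≥0∞} (hs : s ≠ ⊤) : yInv Φ s ≠ ⊤ := by
  obtain ⟨r, hr⟩ :=
    (hΦ.tendsto_top.eventually (isOpen_Ioi.mem_nhds (lt_top_iff_ne_top.2 hs))).exists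
  exact ne_top_of_le_ne_top ENNReal.coe_ne_top (sInf_le hr)

end IsYoung

theorem rinv_ne_zero {n : ℕ} {r : ℝ} (hr : 0 < r) : rinv n r ≠ 0 := by
  simp only [rinv, ne_eq, ENNReal.ofReal_eq_zero, not_le]
  positivity

theorem luxNorm_mono {α : Type*} [MeasurableSpace α] {Φ : ℝ≥0∞ → ℝ≥0∞} (hΦ : Monotone Φ)
    (μ : Measure α) {g g' : α → ℝ≥0∞} (h : g ≤ g') :
    luxNorm Φ μ g ≤ luxNorm Φ μ g' := by
  refine sInf_le_sInf fun lam ⟨hpos, hfin, hint⟩ => ⟨hpos, hfin, le_trans ?_ hint⟩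
  exact lintegral_mono fun x => hΦ (ENNReal.div_le_div_right (h x) lam)

theorem luxNorm_indicator_ball_mono {n : ℕ} {Φ : ℝ≥0∞ → ℝ≥0∞} (hΦ : Monotone Φ)
    (g : Euc n → ℝ≥0∞) (x : Euc n) {r t : ℝ} (hrt : r ≤ t) :
    luxNorm Φ volume ((ball x r).indicator g) ≤ luxNorm Φ volume ((ball x t).indicator g) :=
  luxNorm_mono hΦ volume
    (indicator_le_indicator_of_subset (ball_subset_ball hrt) fun _ => zero_le)

theorem morNorm_le_of_le {n : ℕ} {Φ : ℝ≥0∞ → ℝ≥0∞} {φ φ' : ℝ → ℝ≥0∞}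
    (h : ∀ r, 0 < r → φ r ≤ φ' r) (g : Euc n → ℝ≥0∞) :
    morNorm n Φ φ' g ≤ morNorm n Φ φ g := by
  refine iSup₂_le fun x r => iSup_le fun hr => le_iSup₂_of_le x r (le_iSup_of_le hr ?_)
  gcongr
  exact h r hr

section psiAux

variable {n : ℕ} {Φ : ℝ≥0∞ → ℝ≥0∞} (φ : ℝ → ℝ)

theorem psiAux_div_yInv (hΦ : IsYoung Φ) {r : ℝ} (hr : 0 < r) :
    psiAux n Φ φ r / yInv Φ (rinv n r) =
      ⨅ (t : ℝ) (_ : r ≤ t), ENNReal.ofReal (φ t) / yInv Φ (rinv n t) := by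
  rw [psiAux, mul_comm, ENNReal.mul_div_cancel_right (hΦ.yInv_ne_zero (rinv_ne_zero hr))
    (hΦ.yInv_ne_top ENNReal.ofReal_ne_top)]

theorem psiAux_le (hΦ : IsYoung Φ) {r : ℝ} (hr : 0 < r) : psiAux n Φ φ r ≤ ofR φ r :=
  calc psiAux n Φ φ r
      ≤ yInv Φ (rinv n r) * (ENNReal.ofReal (φ r) / yInv Φ (rinv n r)) := by
        rw [psiAux]; gcongr; exact iInf₂_le r le_rfl
    _ = ofR φ r := ENNReal.mul_div_cancel (hΦ.yInv_ne_zero (rinv_ne_zero hr))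
        (hΦ.yInv_ne_top ENNReal.ofReal_ne_top)

theorem inv_psiAux_mul_yInv (hΦ : IsYoung Φ) {r : ℝ} (hr : 0 < r) :
    (psiAux n Φ φ r)⁻¹ * yInv Φ (rinv n r) =
      ⨆ (t : ℝ) (_ : r ≤ t), yInv Φ (rinv n t) / ENNReal.ofReal (φ t) := by
  have ha0 : ∀ t, 0 < t → yInv Φ (rinv n t) ≠ 0 := fun t ht => hΦ.yInv_ne_zero (rinv_ne_zero ht)
  have hat : ∀ t, yInv Φ (rinv n t) ≠ ⊤ := fun t => hΦ.yInv_ne_top ENNReal.ofReal_ne_top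
  rw [psiAux, ENNReal.mul_inv (Or.inl (ha0 r hr)) (Or.inl (hat r)), mul_right_comm,
    ENNReal.inv_mul_cancel (ha0 r hr) (hat r), one_mul, ENNReal.inv_iInf]
  refine iSup_congr fun t => ?_
  rw [ENNReal.inv_iInf]
  exact iSup_congr fun hrt => ENNReal.inv_div (Or.inl (hat t)) (Or.inl (ha0 t (hr.trans_le hrt)))

/-- The weight at radius `r` of the `ψ`-norm is a supremum of the `φ`-weights at radii `t ≥ r`,
and the Luxemburg norm over `B(x, r)` is dominated by the one over `B(x, t)`. -/
theorem morNorm_psiAux_le (hΦ : IsYoung Φ) (g : Euc n → ℝ≥0∞) :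
    morNorm n Φ (psiAux n Φ φ) g ≤ morNorm n Φ (ofR φ) g := by
  refine iSup₂_le fun x r => iSup_le fun hr => ?_
  rw [inv_psiAux_mul_yInv φ hΦ hr, ENNReal.iSup_mul]
  refine iSup_le fun t => ?_
  rw [ENNReal.iSup_mul]
  refine iSup_le fun hrt => ?_
  calc yInv Φ (rinv n t) / ENNReal.ofReal (φ t) * luxNorm Φ volume ((ball x r).indicator g)
      ≤ (ofR φ t)⁻¹ * yInv Φ (rinv n t) * luxNorm Φ volume ((ball x t).indicator g) := by
        rw [div_eq_mul_inv, mul_comm (yInv Φ _)]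
        exact mul_le_mul_right (luxNorm_indicator_ball_mono hΦ.monotone_s9 g x hrt) _
    _ ≤ morNorm n Φ (ofR φ) g := le_iSup₂_of_le x t (le_iSup_of_le (hr.trans_le hrt) le_rfl)

end psiAux

theorem stmt9_general (n : ℕ) (Φ : ℝ≥0∞ → ℝ≥0∞) (hΦ : IsYoung Φ)
    (φ : ℝ → ℝ) :
    (∀ r s : ℝ, 0 < r → r ≤ s →
      psiAux n Φ φ r / yInv Φ (rinv n r) ≤ psiAux n Φ φ s / yInv Φ (rinv n s)) ∧
    (∀ f : Euc n → ℝ,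
      morNorm n Φ (psiAux n Φ φ) (enn f) = morNorm n Φ (ofR φ) (enn f)) := by
  refine ⟨fun r s hr hrs => ?_, fun f => ?_⟩
  · rw [psiAux_div_yInv φ hΦ hr, psiAux_div_yInv φ hΦ (hr.trans_le hrs)]
    exact le_iInf₂ fun t hst => iInf₂_le t (hrs.trans hst)
  · exact le_antisymm (morNorm_psiAux_le φ hΦ (enn f))
      (morNorm_le_of_le (fun r hr => psiAux_le φ hΦ hr) (enn f))

/-- `r ↦ ψ(r)/Φ⁻¹(r^{-n})` is increasing and `M^{Φ,φ} = M^{Φ,ψ}` with equal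
norms. -/
theorem stmt9 (n : ℕ) (hn : 1 ≤ n) (Φ : ℝ≥0∞ → ℝ≥0∞) (hΦ : IsYoung Φ)
    (φ : ℝ → ℝ) (hφm : Measurable φ) (hφpos : ∀ t > (0:ℝ), 0 < φ t)
    (hinf : ∀ r > (0:ℝ),
      0 < ⨅ (t : ℝ) (_ : r ≤ t), ENNReal.ofReal (φ t) / yInv Φ (rinv n t)) :
    (∀ r s : ℝ, 0 < r → r ≤ s →
      psiAux n Φ φ r / yInv Φ (rinv n r) ≤ psiAux n Φ φ s / yInv Φ (rinv n s)) ∧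
    (∀ f : Euc n → ℝ,
      morNorm n Φ (psiAux n Φ φ) (enn f) = morNorm n Φ (ofR φ) (enn f)) :=
  stmt9_general n Φ hΦ φ

end
end
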